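/- arXiv:1808.01263 — 2 statements merged into one kernel-verified Lean document; each statement's English description precedes it below -/
import Mathlib

section
/- Let n > 1 be a real number and W : ℝ → ℝ be continuously differentiable on [1,∞) with W'(1) = 0 and with W' differentiable at 1, and suppose λ ↦ W'(λ)/(λⁿ − 1) is integrable on (1,∞). Define P(c) = (1 + cⁿ)^{(n−1)/n} · ∫_{(1+cⁿ)^{1/n}}^{∞} W'(λ)/(λⁿ − 1) dλ for c > 0. Then the derivative of P tends to 0 as c → 0⁺, i.e. deriv P (c) → 0 along the filter of c approaching 0 from the right. -/
/-!
With `ρ(c) = (1 + cⁿ)^{1/n}` and `F(x) = ∫_x^∞ W'(λ)/(λⁿ - 1) dλ`, the chain rule and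
the fundamental theorem of calculus give, since `ρ(c)ⁿ - 1 = cⁿ`,
`P'(c) = (n - 1) c^{n-1} (1 + cⁿ)^{-1/n} F(ρ(c)) - W'(ρ(c)) c^{n-1} / cⁿ`.
The first term vanishes as `c → 0⁺` because `F` is bounded by the `L¹` norm of
`W'/(λⁿ - 1)`.
In the second, `W'(ρ)/(ρ - 1) → W''(1)` since `W'(1) = 0`, and `(ρ(c) - 1)/cⁿ → 1/n`, which
leaves the factor `c^{n-1} → 0`.
-/

open Real MeasureTheory Set Filter Topology

section TailIntegral

variable {E : Type*} [NormedAddCommGroup E] [NormedSpace ℝ E] {f : ℝ → E} {a x : ℝ}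

theorem hasDerivAt_integral_Ioi [CompleteSpace E] (hf : IntegrableOn f (Ioi a))
    (hcont : ContinuousOn f (Ioi a)) (hx : a < x) :
    HasDerivAt (fun y => ∫ t in Ioi y, f t) (-f x) x := by
  have hsplit : (fun y => ∫ t in Ioi y, f t) =ᶠ[𝓝 x]
      fun y => (∫ t in Ioi a, f t) - ∫ t in a..y, f t := by
    filter_upwards [eventually_gt_nhds hx] with y hy
    rw [intervalIntegral.integral_of_le hy.le, eq_sub_iff_add_eq',
      ← setIntegral_union (Ioc_disjoint_Ioi le_rfl) measurableSet_Ioi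
        (hf.mono_set Ioc_subset_Ioi_self) (hf.mono_set (Ioi_subset_Ioi hy.le)),
      Ioc_union_Ioi_eq_Ioi hy.le]
  have hFTC : HasDerivAt (fun y => ∫ t in a..y, f t) (f x) x :=
    intervalIntegral.integral_hasDerivAt_right
      ((intervalIntegrable_iff_integrableOn_Ioc_of_le hx.le).2 (hf.mono_set Ioc_subset_Ioi_self))
      (hcont.stronglyMeasurableAtFilter isOpen_Ioi x hx) (hcont.continuousAt (Ioi_mem_nhds hx))
  simpa using ((hasDerivAt_const x _).sub hFTC).congr_of_eventuallyEq hsplit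

theorem norm_integral_Ioi_le (hf : IntegrableOn f (Ioi a)) (hx : a ≤ x) :
    ‖∫ t in Ioi x, f t‖ ≤ ∫ t in Ioi a, ‖f t‖ :=
  (norm_integral_le_integral_norm _).trans <| setIntegral_mono_set hf.norm
    (ae_of_all _ fun _ => norm_nonneg _) (Ioi_subset_Ioi hx).eventuallyLE

end TailIntegral

/-- The hoop stretch at the outer surface `R = 1` of the deformation `r(R)ⁿ = Rⁿ + cⁿ`. -/
noncomputable def outerStretch (n c : ℝ) : ℝ := (1 + c ^ n) ^ (1 / n)

section OuterStretch

variable {n c : ℝ}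

theorem outerStretch_rpow (hn : n ≠ 0) (hc : 0 ≤ c) : outerStretch n c ^ n = 1 + c ^ n := by
  rw [outerStretch, ← rpow_mul (by positivity), one_div_mul_cancel hn, rpow_one]

theorem one_lt_outerStretch (hn : 0 < n) (hc : 0 < c) : 1 < outerStretch n c :=
  one_lt_rpow (lt_add_of_pos_right 1 (rpow_pos_of_pos hc n)) (by positivity)

theorem hasDerivAt_outerStretch (hn : n ≠ 0) (hc : 0 < c) :
    HasDerivAt (outerStretch n) (c ^ (n - 1) * (1 + c ^ n) ^ (1 / n - 1)) c := by
  refine (((hasDerivAt_rpow_const (p := n) (Or.inl hc.ne')).const_add 1).rpow_const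
    (p := 1 / n) (Or.inl (by positivity))).congr_deriv ?_
  field_simp

theorem tendsto_rpow_nhds_zero_of_pos {p : ℝ} (hp : 0 < p) :
    Tendsto (fun c : ℝ => c ^ p) (𝓝 0) (𝓝 0) := by
  simpa [zero_rpow hp.ne'] using (continuousAt_rpow_const 0 p (Or.inr hp.le)).tendsto

theorem tendsto_one_add_rpow (hn : 0 < n) :
    Tendsto (fun c : ℝ => 1 + c ^ n) (𝓝[>] 0) (𝓝[>] 1) := by
  refine tendsto_nhdsWithin_iff.2 ⟨?_, eventually_mem_nhdsWithin.mono
    fun c hc => lt_add_of_pos_right 1 (rpow_pos_of_pos hc n)⟩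
  simpa using ((tendsto_rpow_nhds_zero_of_pos hn).mono_left nhdsWithin_le_nhds).const_add 1

theorem tendsto_outerStretch (hn : 0 < n) : Tendsto (outerStretch n) (𝓝[>] 0) (𝓝[>] 1) := by
  refine tendsto_nhdsWithin_iff.2
    ⟨?_, eventually_mem_nhdsWithin.mono fun c hc => one_lt_outerStretch hn hc⟩
  have h := (continuousAt_rpow_const 1 (1 / n) (Or.inl one_ne_zero)).tendsto.comp
    (tendsto_nhdsWithin_iff.1 (tendsto_one_add_rpow hn)).1
  rwa [one_rpow] at h

theorem tendsto_outerStretch_sub_one_div (hn : 0 < n) :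
    Tendsto (fun c => (outerStretch n c - 1) / c ^ n) (𝓝[>] 0) (𝓝 (1 / n)) := by
  have hderiv : HasDerivAt (fun x : ℝ => x ^ (1 / n)) (1 / n) 1 := by
    simpa using hasDerivAt_rpow_const (x := 1) (p := 1 / n) (Or.inl one_ne_zero)
  refine ((hasDerivAt_iff_tendsto_slope.1 hderiv).comp ((tendsto_one_add_rpow hn).mono_right
    (nhdsWithin_mono _ fun _ h => h.ne'))).congr fun c => ?_
  simp [slope_def_field, outerStretch]

end OuterStretch

section DeadLoad

variable {n c : ℝ}

theorem hasDerivAt_rpow_mul_comp_outerStretch {F : ℝ → ℝ} {v : ℝ} (hn : n ≠ 0)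
    (hc : 0 < c) (hF : HasDerivAt F v (outerStretch n c)) :
    HasDerivAt (fun c => (1 + c ^ n) ^ ((n - 1) / n) * F (outerStretch n c))
      ((n - 1) * c ^ (n - 1) * (1 + c ^ n) ^ (-(1 / n)) * F (outerStretch n c)
        + c ^ (n - 1) * v) c := by
  have hu : HasDerivAt (fun c : ℝ => 1 + c ^ n) (n * c ^ (n - 1)) c :=
    (hasDerivAt_rpow_const (Or.inl hc.ne')).const_add 1
  have hu0 : 0 < 1 + c ^ n := by positivity
  refine ((hu.rpow_const (p := (n - 1) / n) (Or.inl hu0.ne')).mul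
    (hF.comp c (hasDerivAt_outerStretch hn hc))).congr_deriv ?_
  have hexp : (n - 1) / n - 1 = -(1 / n) := by field_simp; ring
  have hcancel : (1 + c ^ n) ^ ((n - 1) / n) * (1 + c ^ n) ^ (1 / n - 1) = 1 := by
    rw [← rpow_add hu0, show (n - 1) / n + (1 / n - 1) = 0 by field_simp; ring, rpow_zero]
  have hcoeff : n * ((n - 1) / n) = n - 1 := by field_simp
  rw [hexp, Function.comp_apply]
  linear_combination (c ^ (n - 1) * (1 + c ^ n) ^ (-(1 / n)) * F (outerStretch n c)) * hcoeff
    + (c ^ (n - 1) * v) * hcancel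

theorem hasDerivAt_deadload {φ : ℝ → ℝ} (hn : 0 < n) (hc : 0 < c)
    (hint : IntegrableOn (fun l => φ l / (l ^ n - 1)) (Ioi 1)) (hφ : ContinuousOn φ (Ioi 1)) :
    HasDerivAt
      (fun c => (1 + c ^ n) ^ ((n - 1) / n) * ∫ l in Ioi (outerStretch n c), φ l / (l ^ n - 1))
      ((n - 1) * c ^ (n - 1) * (1 + c ^ n) ^ (-(1 / n)) *
          (∫ l in Ioi (outerStretch n c), φ l / (l ^ n - 1))
        - φ (outerStretch n c) / c ^ n * c ^ (n - 1)) c := by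
  have hcont : ContinuousOn (fun l => φ l / (l ^ n - 1)) (Ioi 1) :=
    hφ.div ((continuousOn_id.rpow_const fun _ _ => Or.inr hn.le).sub continuousOn_const)
      fun l hl => (sub_pos.2 (one_lt_rpow hl hn)).ne'
  refine (hasDerivAt_rpow_mul_comp_outerStretch hn.ne' hc
    (hasDerivAt_integral_Ioi hint hcont (one_lt_outerStretch hn hc))).congr_deriv ?_
  rw [outerStretch_rpow hn.ne' hc.le, add_sub_cancel_left]
  ring

end DeadLoad

section Limits

variable {n : ℝ}

theorem tendsto_rpow_mul_integral_Ioi_outerStretch (hn : 1 < n) {f : ℝ → ℝ}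
    (hf : IntegrableOn f (Ioi 1)) :
    Tendsto (fun c => (n - 1) * c ^ (n - 1) * (1 + c ^ n) ^ (-(1 / n)) *
      ∫ l in Ioi (outerStretch n c), f l) (𝓝[>] 0) (𝓝 0) := by
  have hn0 : 0 < n := by linarith
  have hpow : Tendsto (fun c : ℝ => (1 + c ^ n) ^ (-(1 / n))) (𝓝[>] 0) (𝓝 1) := by
    have h := (continuousAt_rpow_const 1 (-(1 / n)) (Or.inl one_ne_zero)).tendsto.comp
      (tendsto_nhdsWithin_iff.1 (tendsto_one_add_rpow hn0)).1
    rwa [one_rpow] at h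
  have hcoeff := (((tendsto_rpow_nhds_zero_of_pos (sub_pos.2 hn)).mono_left
    nhdsWithin_le_nhds).const_mul (n - 1)).mul hpow
  rw [mul_zero, zero_mul] at hcoeff
  refine hcoeff.zero_mul_isBoundedUnder_le ⟨∫ l in Ioi 1, ‖f l‖, eventually_map.2 ?_⟩
  filter_upwards [self_mem_nhdsWithin] with c hc
  exact norm_integral_Ioi_le hf (one_lt_outerStretch hn0 hc).le

theorem tendsto_comp_outerStretch_div_rpow_mul (hn : 1 < n) {φ : ℝ → ℝ} (hφ1 : φ 1 = 0)
    (hφ : DifferentiableAt ℝ φ 1) :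
    Tendsto (fun c => φ (outerStretch n c) / c ^ n * c ^ (n - 1)) (𝓝[>] 0) (𝓝 0) := by
  have hn0 : 0 < n := by linarith
  have hslope : Tendsto (fun c => slope φ 1 (outerStretch n c)) (𝓝[>] 0) (𝓝 (deriv φ 1)) :=
    (hasDerivAt_iff_tendsto_slope.1 hφ.hasDerivAt).comp
      ((tendsto_outerStretch hn0).mono_right (nhdsWithin_mono _ fun _ h => h.ne'))
  have h := (hslope.mul (tendsto_outerStretch_sub_one_div hn0)).mul
    ((tendsto_rpow_nhds_zero_of_pos (sub_pos.2 hn)).mono_left nhdsWithin_le_nhds)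
  rw [mul_zero] at h
  refine h.congr' ?_
  filter_upwards [self_mem_nhdsWithin] with c hc
  have : outerStretch n c - 1 ≠ 0 := (sub_pos.2 (one_lt_outerStretch hn0 hc)).ne'
  rw [slope_def_field, hφ1, sub_zero]
  field_simp

end Limits

/-- The derivative of the dead-load function P tends to 0 as the cavity radius
tends to 0 from the right. -/
theorem deriv_deadload_tendsto_zero (n : ℝ) (hn : 1 < n) (W : ℝ → ℝ)
    (hW : ContDiffOn ℝ 1 W (Ici 1))
    (hW1 : deriv W 1 = 0)
    (hW2 : DifferentiableAt ℝ (deriv W) 1)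
    (hInt : IntegrableOn (fun l => deriv W l / (l ^ n - 1)) (Ioi 1))
    (P : ℝ → ℝ)
    (hP : ∀ c : ℝ, 0 < c → P c = (1 + c ^ n) ^ ((n - 1) / n) *
      ∫ l in Ioi ((1 + c ^ n) ^ (1 / n)), deriv W l / (l ^ n - 1)) :
    Tendsto (deriv P) (nhdsWithin 0 (Ioi 0)) (nhds 0) := by
  have hn0 : 0 < n := by linarith
  have hW' : ContinuousOn (deriv W) (Ioi 1) :=
    (hW.mono Ioi_subset_Ici_self).continuousOn_deriv_of_isOpen isOpen_Ioi le_rfl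
  have hlim := (tendsto_rpow_mul_integral_Ioi_outerStretch hn hInt).sub
    (tendsto_comp_outerStretch_div_rpow_mul hn hW1 hW2)
  rw [sub_zero] at hlim
  refine hlim.congr' ?_
  filter_upwards [self_mem_nhdsWithin] with c hc
  refine ((hasDerivAt_deadload hn0 hc hInt hW').congr_of_eventuallyEq ?_).deriv.symm
  filter_upwards [eventually_gt_nhds hc] with y hy using hP y hy
end

section
/- Let n > 1 be a real number and W : ℝ → ℝ be continuously differentiable on [1,∞) with W'(1) = 0 and with W' differentiable at 1 (write W''(1) for its derivative there), and suppose λ ↦ W'(λ)/(λⁿ − 1) is integrable on (1,∞). Define P̂(θ) = θ · ∫_{θ^{1/(n−1)}}^{∞} W'(λ)/(λⁿ − 1) dλ for θ > 1. Then the derivative of P̂ has a limit as θ → 1⁺, and lim_{θ→1⁺} P̂'(θ) = ∫₁^{∞} W'(λ)/(λⁿ − 1) dλ − W''(1)/(n(n−1)). -/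
open Real MeasureTheory Set Filter
open scoped Topology

/-!
Writing `g l = W'(l)/(lⁿ - 1)` and `p = 1/(n-1)`, the fundamental theorem of calculus for the
tail `c ↦ ∫_c^∞ g` gives, for `θ > 1`,
`P̂'(θ) = ∫_{θ^p}^∞ g - θ · g(θ^p) · p θ^{p-1}`.
As `θ → 1⁺` the tail tends to `∫_1^∞ g`, and since `W'(1) = 0` the integrand `g(l)` is a quotient
of two functions vanishing at `1`, so it tends to the quotient `W''(1)/n` of their derivatives.
-/

section Tail

variable {g : ℝ → ℝ} {a : ℝ}

theorem integral_Ioi_eq_sub_intervalIntegral (hg : IntegrableOn g (Ioi a)) {x : ℝ} (hx : a ≤ x) :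
    ∫ l in Ioi x, g l = (∫ l in Ioi a, g l) - ∫ l in a..x, g l := by
  rw [← intervalIntegral.integral_Ioi_sub_Ioi hg hx, sub_sub_cancel]

theorem tendsto_integral_Ioi_nhdsGT (hg : IntegrableOn g (Ioi a)) :
    Tendsto (fun x => ∫ l in Ioi x, g l) (𝓝[>] a) (𝓝 (∫ l in Ioi a, g l)) := by
  have hprim : ContinuousWithinAt (fun x => ∫ l in a..x, g l) (Icc a (a + 1)) a := by
    refine intervalIntegral.continuousWithinAt_primitive (measure_singleton a) ?_
    rw [min_self, max_eq_right (by linarith),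
      intervalIntegrable_iff_integrableOn_Ioc_of_le (by linarith)]
    exact hg.mono_set Ioc_subset_Ioi_self
  have hprim' : Tendsto (fun x => ∫ l in a..x, g l) (𝓝[>] a) (𝓝 0) := by
    have hle : 𝓝[>] a ≤ 𝓝[Icc a (a + 1)] a := by
      rw [← nhdsWithin_Ioc_eq_nhdsGT (by linarith : a < a + 1)]
      exact nhdsWithin_mono _ Ioc_subset_Icc_self
    simpa using hprim.tendsto.mono_left hle
  have hlim := (tendsto_const_nhds (x := ∫ l in Ioi a, g l)).sub hprim'
  rw [sub_zero] at hlim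
  refine hlim.congr' ?_
  filter_upwards [self_mem_nhdsWithin] with x hx
  exact (integral_Ioi_eq_sub_intervalIntegral hg (le_of_lt hx)).symm

theorem hasDerivAt_integral_Ioi_s3 (hg : IntegrableOn g (Ioi a)) {c : ℝ} (hc : a < c)
    (hgc : ContinuousAt g c) :
    HasDerivAt (fun x => ∫ l in Ioi x, g l) (-g c) c := by
  have hprim : HasDerivAt (fun x => ∫ l in a..x, g l) (g c) c :=
    intervalIntegral.integral_hasDerivAt_right
      ((intervalIntegrable_iff_integrableOn_Ioc_of_le hc.le).2 (hg.mono_set Ioc_subset_Ioi_self))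
      (AEStronglyMeasurable.stronglyMeasurableAtFilter_of_mem hg.aestronglyMeasurable
        (Ioi_mem_nhds hc)) hgc
  have htail := (hasDerivAt_const c (∫ l in Ioi a, g l)).sub hprim
  rw [zero_sub] at htail
  refine htail.congr_of_eventuallyEq ?_
  filter_upwards [Ioi_mem_nhds hc] with x hx
  exact integral_Ioi_eq_sub_intervalIntegral hg (le_of_lt hx)

theorem hasDerivAt_mul_integral_Ioi_rpow (hg : IntegrableOn g (Ioi a)) {p θ : ℝ} (hθ : 0 < θ)
    (ha : a < θ ^ p) (hgc : ContinuousAt g (θ ^ p)) :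
    HasDerivAt (fun t => t * ∫ l in Ioi (t ^ p), g l)
      ((∫ l in Ioi (θ ^ p), g l) - θ * (g (θ ^ p) * (p * θ ^ (p - 1)))) θ := by
  have htail := (hasDerivAt_integral_Ioi_s3 hg ha hgc).comp θ
    (hasDerivAt_rpow_const (p := p) (Or.inl hθ.ne'))
  exact ((hasDerivAt_id' θ).mul htail).congr_deriv (by simp only [Function.comp_apply]; ring)

end Tail

theorem tendsto_div_of_hasDerivAt_of_eq_zero {𝕜 : Type*} [NontriviallyNormedField 𝕜]
    {f h : 𝕜 → 𝕜} {f' h' a : 𝕜} (hf : HasDerivAt f f' a) (hh : HasDerivAt h h' a)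
    (hfa : f a = 0) (hha : h a = 0) (hh' : h' ≠ 0) :
    Tendsto (fun x => f x / h x) (𝓝[≠] a) (𝓝 (f' / h')) := by
  refine ((hasDerivAt_iff_tendsto_slope.1 hf).div (hasDerivAt_iff_tendsto_slope.1 hh) hh').congr' ?_
  filter_upwards [self_mem_nhdsWithin] with x hx
  rw [Pi.div_apply, slope_def_field, slope_def_field, hfa, hha, sub_zero, sub_zero,
    div_div_div_cancel_right₀ (sub_ne_zero.2 hx)]

theorem tendsto_div_rpow_sub_one {f : ℝ → ℝ} {f' n : ℝ} (hf : HasDerivAt f f' 1) (hf1 : f 1 = 0)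
    (hn : n ≠ 0) :
    Tendsto (fun l => f l / (l ^ n - 1)) (𝓝[≠] 1) (𝓝 (f' / n)) := by
  have hpow : HasDerivAt (fun l : ℝ => l ^ n - 1) n 1 := by
    simpa using (hasDerivAt_rpow_const (x := 1) (p := n) (Or.inl one_ne_zero)).sub_const 1
  exact tendsto_div_of_hasDerivAt_of_eq_zero hf hpow hf1 (by simp) hn

theorem continuousOn_div_rpow_sub_one {f : ℝ → ℝ} {n : ℝ} (hf : ContinuousOn f (Ioi 1))
    (hn : 0 < n) :
    ContinuousOn (fun l => f l / (l ^ n - 1)) (Ioi 1) := by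
  refine hf.div ((continuousOn_id.rpow_const fun _ _ => Or.inr hn.le).sub continuousOn_const) ?_
  intro l hl
  exact sub_ne_zero.2 (one_lt_rpow hl hn).ne'

theorem tendsto_rpow_nhdsGT_one {p : ℝ} (hp : 0 < p) :
    Tendsto (fun θ : ℝ => θ ^ p) (𝓝[>] 1) (𝓝[>] 1) := by
  refine tendsto_nhdsWithin_of_tendsto_nhds_of_eventually_within _ ?_ ?_
  · simpa using ((continuousAt_rpow_const 1 p (Or.inl one_ne_zero)).tendsto).mono_left
      nhdsWithin_le_nhds
  · filter_upwards [self_mem_nhdsWithin] with θ hθ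
    exact one_lt_rpow hθ hp

/-- The key identity in the proof of the cavitation-stability proposition:
the derivative of the dead load P̂, expressed in the outer-surface variable θ,
tends to P₀ − W''(1)/(n(n−1)) as θ → 1⁺. -/
theorem deriv_deadload_limit (n : ℝ) (hn : 1 < n) (W : ℝ → ℝ) (W'' : ℝ)
    (hW : ContDiffOn ℝ 1 W (Ici 1))
    (hW1 : deriv W 1 = 0)
    (hW2 : HasDerivAt (deriv W) W'' 1)
    (hInt : IntegrableOn (fun l => deriv W l / (l ^ n - 1)) (Ioi 1))
    (Phat : ℝ → ℝ)
    (hPhat : ∀ θ : ℝ, 1 < θ → Phat θ = θ *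
      ∫ l in Ioi (θ ^ (1 / (n - 1))), deriv W l / (l ^ n - 1)) :
    Tendsto (deriv Phat) (nhdsWithin 1 (Ioi 1))
      (nhds ((∫ l in Ioi (1 : ℝ), deriv W l / (l ^ n - 1)) - W'' / (n * (n - 1)))) := by
  set g : ℝ → ℝ := fun l => deriv W l / (l ^ n - 1)
  set p := 1 / (n - 1) with hp_def
  have hp : 0 < p := one_div_pos.2 (by linarith)
  have hg_cont : ContinuousOn g (Ioi 1) := continuousOn_div_rpow_sub_one
    ((hW.mono Ioi_subset_Ici_self).continuousOn_deriv_of_isOpen isOpen_Ioi le_rfl) (by linarith)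
  have hderiv : ∀ᶠ θ in 𝓝[>] 1,
      (∫ l in Ioi (θ ^ p), g l) - θ * (g (θ ^ p) * (p * θ ^ (p - 1))) = deriv Phat θ := by
    filter_upwards [self_mem_nhdsWithin] with θ hθ
    have hθp : 1 < θ ^ p := one_lt_rpow hθ hp
    have hPhat_eq : Phat =ᶠ[𝓝 θ] fun t => t * ∫ l in Ioi (t ^ p), g l :=
      eventually_of_mem (Ioi_mem_nhds hθ) hPhat
    rw [hPhat_eq.deriv_eq, (hasDerivAt_mul_integral_Ioi_rpow hInt (zero_lt_one.trans hθ) hθp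
      (hg_cont.continuousAt (Ioi_mem_nhds hθp))).deriv]
  have hq := tendsto_rpow_nhdsGT_one hp
  have hg_lim : Tendsto g (𝓝[>] 1) (𝓝 (W'' / n)) :=
    (tendsto_div_rpow_sub_one hW2 hW1 (by linarith)).mono_left (nhdsGT_le_nhdsNE 1)
  have hfactor :
      Tendsto (fun θ : ℝ => θ * (p * θ ^ (p - 1))) (𝓝[>] 1) (𝓝 (1 * (p * 1 ^ (p - 1)))) :=
    ((continuousAt_id.mul (continuousAt_const.mul
      (continuousAt_rpow_const 1 (p - 1) (Or.inl one_ne_zero)))).tendsto).mono_left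
      nhdsWithin_le_nhds
  have hlim := ((tendsto_integral_Ioi_nhdsGT hInt).comp hq).sub ((hg_lim.comp hq).mul hfactor)
  convert hlim.congr' (hderiv.mono fun θ h => ?_) using 2
  · rw [one_rpow, hp_def]
    field_simp
  · simp only [← h, Function.comp_apply]
    ring
end
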